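/- Let G ⊂ ℝⁿ be a convex body and u ∈ 𝕊ⁿ⁻¹ a unit vector. For t > 0 with t < h_G(u) − min_{x ∈ G} ⟨u, x⟩, define C_t := C_G(u,t) and S_t := G ∩ {x ∈ ℝⁿ : ⟨u, x⟩ = h_G(u) − t}. Then d_H(C_t, S_t) → 0 as t → 0⁺; that is, for every ε > 0 there exists δ > 0 such that for all t with 0 < t < δ one has d_H(C_t, S_t) < ε. -/
import Mathlib


open MeasureTheory Metric Pointwise
open scoped RealInnerProductSpace

/-- Support function `h_G(u) = sup_{x ∈ G} ⟪u, x⟫`. -/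
noncomputable def suppFn {n : ℕ} (G : Set (EuclideanSpace ℝ (Fin n)))
    (u : EuclideanSpace ℝ (Fin n)) : ℝ :=
  sSup ((fun x => ⟪u, x⟫) '' G)

/-- `min_{x ∈ G} ⟪u, x⟫`. -/
noncomputable def infFn {n : ℕ} (G : Set (EuclideanSpace ℝ (Fin n)))
    (u : EuclideanSpace ℝ (Fin n)) : ℝ :=
  sInf ((fun x => ⟪u, x⟫) '' G)

/-- The cap of `G` in direction `u` with height `h`:
`C_G(u,h) = {x ∈ G : ⟪u, x⟫ ≥ h_G(u) − h}`. -/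
noncomputable def capG {n : ℕ} (G : Set (EuclideanSpace ℝ (Fin n)))
    (u : EuclideanSpace ℝ (Fin n)) (h : ℝ) : Set (EuclideanSpace ℝ (Fin n)) :=
  {x ∈ G | suppFn G u - h ≤ ⟪u, x⟫}

theorem stmt12 {n : ℕ} (G : Set (EuclideanSpace ℝ (Fin n)))
    (hGcv : Convex ℝ G) (hGcp : IsCompact G) (hGint : (interior G).Nonempty)
    (u : EuclideanSpace ℝ (Fin n)) (hu : ‖u‖ = 1) :
    ∀ ε : ℝ, 0 < ε → ∃ δ : ℝ, 0 < δ ∧ ∀ t : ℝ, 0 < t → t < δ →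
      t < suppFn G u - infFn G u →
      hausdorffDist (capG G u t)
        (G ∩ {x : EuclideanSpace ℝ (Fin n) | ⟪u, x⟫ = suppFn G u - t}) < ε := by
  intro ε hε
  obtain ⟨z, hz⟩ := hGint
  obtain ⟨r, hr, hball⟩ := Metric.isOpen_iff.mp isOpen_interior z hz
  have hzG : z ∈ G := interior_subset hz
  set ρ := r / 2 with hρdef
  have hρ : 0 < ρ := by positivity
  have hbdd : BddAbove ((fun x => ⟪u, x⟫) '' G) :=
    (hGcp.image (continuous_const.inner continuous_id)).bddAbove
  have hle : ∀ x ∈ G, ⟪u, x⟫ ≤ suppFn G u := fun x hx => le_csSup hbdd ⟨x, hx, rfl⟩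
  have huu : ⟪u, u⟫ = 1 := by
    have := real_inner_self_eq_norm_sq u
    rw [hu] at this; simpa using this
  have hz' : ⟪u, z⟫ + ρ ≤ suppFn G u := by
    have hmem : z + ρ • u ∈ G := by
      apply interior_subset
      apply hball
      simp only [Metric.mem_ball, dist_eq_norm]
      have : z + ρ • u - z = ρ • u := by abel
      rw [this, norm_smul, hu, mul_one, Real.norm_eq_abs, abs_of_pos hρ]
      rw [hρdef]; linarith
    have := hle _ hmem
    rwa [inner_add_right, inner_smul_right, huu, mul_one] at this
  set D := Metric.diam G with hD
  have hD0 : 0 ≤ D := Metric.diam_nonneg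
  refine ⟨min (ρ / 2) (ε * ρ / (4 * (D + 1))), by positivity, ?_⟩
  intro t ht htδ _
  have ht1 : t < ρ / 2 := lt_of_lt_of_le htδ (min_le_left _ _)
  have ht2 : t < ε * ρ / (4 * (D + 1)) := lt_of_lt_of_le htδ (min_le_right _ _)
  set H := suppFn G u with hH
  -- key construction: from any cap point, find a slice point nearby
  have key : ∀ x ∈ G, H - t ≤ ⟪u, x⟫ →
      ∃ y ∈ G ∩ {x : EuclideanSpace ℝ (Fin n) | ⟪u, x⟫ = H - t}, dist x y ≤ ε / 2 := by
    intro x hxG hxc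
    have hxle : ⟪u, x⟫ ≤ H := hle x hxG
    set a := ⟪u, x⟫ with ha
    set c := ⟪u, z⟫ with hc
    have hdenom : ρ - t ≤ a - c := by
      have : c ≤ H - ρ := by linarith
      linarith
    have hdpos : 0 < a - c := by linarith
    set s := (a - (H - t)) / (a - c) with hs
    have hs0 : 0 ≤ s := div_nonneg (by linarith) (le_of_lt hdpos)
    have hs1 : s ≤ 1 := by
      rw [div_le_one hdpos]; linarith
    set y := x + s • (z - x) with hy
    have hyG : y ∈ G := by
      have : y = (1 - s) • x + s • z := by
        rw [hy]; module
      rw [this]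
      exact hGcv hxG hzG (by linarith) hs0 (by ring)
    have hyinner : ⟪u, y⟫ = H - t := by
      rw [hy, inner_add_right, inner_smul_right, inner_sub_right, ← hc, ← ha, hs]
      field_simp
      ring
    refine ⟨y, ⟨hyG, hyinner⟩, ?_⟩
    have hdist : dist x y = s * dist z x := by
      rw [dist_eq_norm, hy]
      have : x - (x + s • (z - x)) = s • (x - z) := by module
      rw [this, norm_smul, Real.norm_eq_abs, abs_of_nonneg hs0, dist_eq_norm,
        ← norm_neg (z - x)]
      congr 1
      abel
    have hzx : dist z x ≤ D := Metric.dist_le_diam_of_mem hGcp.isBounded hzG hxG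
    have hnum : s * (a - c) = a - (H - t) := div_mul_cancel₀ _ (ne_of_gt hdpos)
    have hsbound : s * (ρ / 2) ≤ t := by
      have h1 : s * (ρ - t) ≤ s * (a - c) := by
        apply mul_le_mul_of_nonneg_left hdenom hs0
      have h2 : s * (ρ / 2) ≤ s * (ρ - t) := by
        apply mul_le_mul_of_nonneg_left (by linarith) hs0
      nlinarith
    have hdz : 0 ≤ dist z x := dist_nonneg
    have h4 : t * (4 * (D + 1)) < ε * ρ := (lt_div_iff₀ (by positivity)).mp ht2
    have h5 : s * D < ε / 2 := by
      nlinarith [mul_le_mul_of_nonneg_right hsbound hD0, hρ, ht.le]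
    have h6 : s * dist z x ≤ s * D := mul_le_mul_of_nonneg_left hzx hs0
    rw [hdist]; linarith
  have half : hausdorffDist (capG G u t)
      (G ∩ {x : EuclideanSpace ℝ (Fin n) | ⟪u, x⟫ = H - t}) ≤ ε / 2 := by
    apply Metric.hausdorffDist_le_of_mem_dist (by linarith)
    · rintro x ⟨hxG, hxc⟩
      exact key x hxG hxc
    · rintro x ⟨hxG, hxe⟩
      refine ⟨x, ⟨hxG, le_of_eq hxe.symm⟩, ?_⟩
      rw [dist_self]; positivity
  linarith
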